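/- The pair (S, F_i) is an entropy pair for the inviscid (Euler) fluxes: for each i = 1, 2, 3 and every admissible primitive state v = (ρ, u₁, u₂, u₃, T) with ρ > 0 and T > 0, the compatibility identity w(v)ᵀ · J_{f_i}(v) = J_{F_i}(v) holds, where J_{f_i}(v) is the 5×5 Jacobian of the map v ↦ f_i(v) and J_{F_i}(v) is the 1×5 derivative of v ↦ F_i(v). Consequently, for any differentiable field x ↦ v(x), wᵀ ∂f_i/∂x = ∂F_i/∂x. -/

import Mathlib

open Matrix

noncomputable section

/-- Entropy variables `w(v) = (h/T - s - |u|²/(2T), u₁/T, u₂/T, u₃/T, -1/T)`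
with `s = c_v log T - R log ρ`, `h = c_p T`, `c_p = c_v + R`. -/
def entropyVarsMap (R cv : ℝ) (v : Fin 5 → ℝ) : Fin 5 → ℝ :=
  ![((cv + R) * v 4) / v 4 - (cv * Real.log (v 4) - R * Real.log (v 0))
      - ((v 1) ^ 2 + (v 2) ^ 2 + (v 3) ^ 2) / (2 * v 4),
    v 1 / v 4, v 2 / v 4, v 3 / v 4, -(1 / v 4)]

/-- Inviscid (Euler) flux in direction `x_i`:
`f_i(v) = (ρu_i, ρu_iu₁ + δ_{i1}p, ρu_iu₂ + δ_{i2}p, ρu_iu₃ + δ_{i3}p, u_i(ρE + p))`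
with `p = ρRT` and `E = c_v T + |u|²/2`, as a map of `v = (ρ, u₁, u₂, u₃, T)`. -/
def invFluxMap (R cv : ℝ) (i : Fin 3) (v : Fin 5 → ℝ) : Fin 5 → ℝ :=
  ![v 0 * ![v 1, v 2, v 3] i,
    v 0 * ![v 1, v 2, v 3] i * v 1 + (if i = 0 then v 0 * R * v 4 else 0),
    v 0 * ![v 1, v 2, v 3] i * v 2 + (if i = 1 then v 0 * R * v 4 else 0),
    v 0 * ![v 1, v 2, v 3] i * v 3 + (if i = 2 then v 0 * R * v 4 else 0),
    ![v 1, v 2, v 3] i *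
      (v 0 * (cv * v 4 + ((v 1) ^ 2 + (v 2) ^ 2 + (v 3) ^ 2) / 2) + v 0 * R * v 4)]

/-- Entropy flux `F_i(v) = -ρ u_i s`. -/
def entropyFluxMap (R cv : ℝ) (i : Fin 3) (v : Fin 5 → ℝ) : ℝ :=
  -(v 0 * ![v 1, v 2, v 3] i * (cv * Real.log (v 4) - R * Real.log (v 0)))

/-!
Write `U = (ρ, ρu₁, ρu₂, ρu₃, ρE)` for the conservative variables, `S = -ρs` for the entropy and
`p = ρRT`. Then `f_i = u_i U + p e_{u_i} + u_i p e_E` and `F_i = u_i S`. The Gibbs relation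
`w · dU = dS` and the identity `w · U = p/T + S` give
`w · df_i = du_i (p/T + S) + u_i dS + (u_i/T) dp - d(u_i p)/T = d(u_i S) = dF_i`.
The statement along a field `x ↦ v(x)` is the chain rule applied to this pointwise identity.
-/

section Calculus

variable {𝕜 ι E : Type*} [NontriviallyNormedField 𝕜] [NormedAddCommGroup E]
  [NormedSpace 𝕜 E]

theorem fderiv_apply_apply {Φ : E → ι → 𝕜} {x : E} (hΦ : DifferentiableAt 𝕜 Φ x) (d : E)
    (j : ι) : fderiv 𝕜 Φ x d j = fderiv 𝕜 (fun y => Φ y j) x d := by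
  rw [fderiv_apply hΦ]
  rfl

theorem fderiv_eval (j : ι) (v : ι → 𝕜) :
    fderiv 𝕜 (fun y : ι → 𝕜 => y j) v = ContinuousLinearMap.proj j :=
  (hasFDerivAt_apply j v).fderiv

theorem dotProduct_deriv_comp_of_dotProduct_fderiv [Fintype ι] {f : E → ι → 𝕜} {F : E → 𝕜}
    {w : ι → 𝕜} {γ : 𝕜 → E} {x : 𝕜} (hf : DifferentiableAt 𝕜 f (γ x))
    (hF : DifferentiableAt 𝕜 F (γ x)) (hγ : DifferentiableAt 𝕜 γ x)
    (h : ∀ d, w ⬝ᵥ fderiv 𝕜 f (γ x) d = fderiv 𝕜 F (γ x) d) :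
    w ⬝ᵥ deriv (fun y => f (γ y)) x = deriv (fun y => F (γ y)) x := by
  have hfγ : HasDerivAt (fun y => f (γ y)) (fderiv 𝕜 f (γ x) (deriv γ x)) x :=
    hf.hasFDerivAt.comp_hasDerivAt x hγ.hasDerivAt
  have hFγ : HasDerivAt (fun y => F (γ y)) (fderiv 𝕜 F (γ x) (deriv γ x)) x :=
    hF.hasFDerivAt.comp_hasDerivAt x hγ.hasDerivAt
  rw [hfγ.deriv, hFγ.deriv]
  exact h _

end Calculus

section EulerFluxes

variable (R cv : ℝ) (i : Fin 3) {v : Fin 5 → ℝ}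

def velocityIndex : Fin 5 := i.succ.castSucc

def consVarsMap (v : Fin 5 → ℝ) : Fin 5 → ℝ :=
  ![v 0, v 0 * v 1, v 0 * v 2, v 0 * v 3, v 0 * (cv * v 4 + (v 1 ^ 2 + v 2 ^ 2 + v 3 ^ 2) / 2)]

def entropyDensityMap (v : Fin 5 → ℝ) : ℝ :=
  -(v 0 * (cv * Real.log (v 4) - R * Real.log (v 0)))

def pressureMap (v : Fin 5 → ℝ) : ℝ := v 0 * R * v 4

theorem invFluxMap_eq : invFluxMap R cv i = fun v =>
    v (velocityIndex i) • consVarsMap cv v + pressureMap R v • Pi.single (velocityIndex i) 1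
      + (v (velocityIndex i) * pressureMap R v) • Pi.single 4 1 := by
  funext v j
  simp only [Pi.add_apply, Pi.smul_apply, Pi.single_apply, smul_eq_mul]
  fin_cases i <;> fin_cases j <;>
    simp [invFluxMap, consVarsMap, pressureMap, velocityIndex] <;> ring

theorem entropyFluxMap_eq :
    entropyFluxMap R cv i = fun v => v (velocityIndex i) * entropyDensityMap R cv v := by
  funext v
  fin_cases i <;> simp [entropyFluxMap, entropyDensityMap, velocityIndex] <;> ring

theorem differentiable_consVarsMap : Differentiable ℝ (consVarsMap cv) := by
  refine fun v => differentiableAt_pi.2 fun j => ?_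
  fin_cases j <;> simp only [consVarsMap, Fin.zero_eta, Fin.mk_one, Fin.reduceFinMk, cons_val_zero,
    cons_val_one, cons_val] <;> fun_prop

theorem differentiableAt_entropyDensityMap (h0 : 0 < v 0) (h4 : 0 < v 4) :
    DifferentiableAt ℝ (entropyDensityMap R cv) v := by
  unfold entropyDensityMap
  fun_prop (disch := positivity)

theorem entropyVarsMap_velocityIndex :
    entropyVarsMap R cv v (velocityIndex i) = v (velocityIndex i) / v 4 := by
  fin_cases i <;> rfl

theorem entropyVarsMap_four : entropyVarsMap R cv v 4 = -(1 / v 4) := rfl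

theorem entropyVarsMap_dotProduct_consVarsMap (h4 : v 4 ≠ 0) :
    entropyVarsMap R cv v ⬝ᵥ consVarsMap cv v = v 0 * R + entropyDensityMap R cv v := by
  simp only [dotProduct, Fin.sum_univ_five, entropyVarsMap, consVarsMap, entropyDensityMap,
    cons_val_zero, cons_val_one, cons_val]
  field_simp
  ring

/-- The Gibbs relation: `w` is the gradient of `S` with respect to the conservative variables. -/
theorem entropyVarsMap_dotProduct_fderiv_consVarsMap (h0 : 0 < v 0) (h4 : 0 < v 4)
    (d : Fin 5 → ℝ) :
    entropyVarsMap R cv v ⬝ᵥ fderiv ℝ (consVarsMap cv) v d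
      = fderiv ℝ (entropyDensityMap R cv) v d := by
  unfold entropyDensityMap
  simp only [dotProduct, Fin.sum_univ_five, fderiv_apply_apply (differentiable_consVarsMap cv v),
    consVarsMap, entropyVarsMap, cons_val_zero, cons_val_one, cons_val]
  simp (disch := first | fun_prop | positivity) only [div_eq_mul_inv, fderiv_fun_neg,
    fderiv_fun_mul, fderiv_fun_add, fderiv_fun_sub, fderiv_fun_pow, fderiv.log, fderiv_eval,
    fderiv_const_apply, _root_.zero_apply, _root_.neg_apply, _root_.add_apply, _root_.sub_apply,
    _root_.smul_apply, ContinuousLinearMap.proj_apply, smul_eq_mul, nsmul_eq_mul]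
  field_simp
  ring

theorem entropyVarsMap_dotProduct_fderiv_invFluxMap (h0 : 0 < v 0) (h4 : 0 < v 4)
    (d : Fin 5 → ℝ) :
    entropyVarsMap R cv v ⬝ᵥ fderiv ℝ (invFluxMap R cv i) v d
      = fderiv ℝ (entropyFluxMap R cv i) v d := by
  have hU := differentiable_consVarsMap cv v
  have hS := differentiableAt_entropyDensityMap R cv h0 h4
  rw [invFluxMap_eq, entropyFluxMap_eq]
  unfold pressureMap
  simp (disch := fun_prop) only [fderiv_fun_add, fderiv_fun_smul, fderiv_fun_mul, fderiv_eval,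
    fderiv_const_apply]
  simp only [_root_.add_apply, _root_.smul_apply, _root_.zero_apply,
    ContinuousLinearMap.smulRight_apply, ContinuousLinearMap.proj_apply, dotProduct_add,
    dotProduct_smul, dotProduct_zero, dotProduct_single, smul_eq_mul,
    entropyVarsMap_dotProduct_fderiv_consVarsMap R cv h0 h4,
    entropyVarsMap_dotProduct_consVarsMap R cv h4.ne', entropyVarsMap_velocityIndex,
    entropyVarsMap_four]
  field_simp
  ring

theorem differentiable_invFluxMap : Differentiable ℝ (invFluxMap R cv i) := by
  have := differentiable_consVarsMap cv
  rw [invFluxMap_eq]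
  unfold pressureMap
  fun_prop

theorem differentiableAt_entropyFluxMap (h0 : 0 < v 0) (h4 : 0 < v 4) :
    DifferentiableAt ℝ (entropyFluxMap R cv i) v := by
  rw [entropyFluxMap_eq]
  exact (differentiableAt_apply _ v).mul (differentiableAt_entropyDensityMap R cv h0 h4)

end EulerFluxes

theorem entropy_pair_compatibility_general
    (R cv : ℝ) (i : Fin 3) :
    (∀ v : Fin 5 → ℝ, 0 < v 0 → 0 < v 4 →
      ∀ d : Fin 5 → ℝ,
        entropyVarsMap R cv v ⬝ᵥ fderiv ℝ (invFluxMap R cv i) v d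
          = fderiv ℝ (entropyFluxMap R cv i) v d) ∧
    (∀ (vf : ℝ → Fin 5 → ℝ) (x : ℝ), DifferentiableAt ℝ vf x →
      0 < vf x 0 → 0 < vf x 4 →
        entropyVarsMap R cv (vf x) ⬝ᵥ deriv (fun y => invFluxMap R cv i (vf y)) x
          = deriv (fun y => entropyFluxMap R cv i (vf y)) x) := by
  refine ⟨fun v h0 h4 => entropyVarsMap_dotProduct_fderiv_invFluxMap R cv i h0 h4, ?_⟩
  intro vf x hvf h0 h4
  exact dotProduct_deriv_comp_of_dotProduct_fderiv (differentiable_invFluxMap R cv i _)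
    (differentiableAt_entropyFluxMap R cv i h0 h4) hvf
    (entropyVarsMap_dotProduct_fderiv_invFluxMap R cv i h0 h4)

/-- the pair `(S, F_i)` is an entropy pair for the inviscid
(Euler) fluxes: for each `i` and every admissible state `v` (`ρ > 0`, `T > 0`)
the compatibility identity `w(v)ᵀ · J_{f_i}(v) = J_{F_i}(v)` holds (stated as
an identity of linear maps applied to an arbitrary direction `d`);
consequently, for any differentiable field `x ↦ v(x)` (with admissible values),
`wᵀ ∂f_i/∂x = ∂F_i/∂x`. -/
theorem entropy_pair_compatibility
    (R cv : ℝ) (hR : 0 < R) (hcv : 0 < cv) (i : Fin 3) :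
    (∀ v : Fin 5 → ℝ, 0 < v 0 → 0 < v 4 →
      ∀ d : Fin 5 → ℝ,
        entropyVarsMap R cv v ⬝ᵥ fderiv ℝ (invFluxMap R cv i) v d
          = fderiv ℝ (entropyFluxMap R cv i) v d) ∧
    (∀ (vf : ℝ → Fin 5 → ℝ) (x : ℝ), DifferentiableAt ℝ vf x →
      0 < vf x 0 → 0 < vf x 4 →
        entropyVarsMap R cv (vf x) ⬝ᵥ deriv (fun y => invFluxMap R cv i (vf y)) x
          = deriv (fun y => entropyFluxMap R cv i (vf y)) x) :=
  entropy_pair_compatibility_general R cv i
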